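/- Let H be a separable Hilbert space, A a normal operator with scalar-valued spectral measure λ_A, and Γ^{A,B} the double operator integral *-representation of L^∞(λ_A×λ_B) on S²(H). If a ∈ L^∞(λ_A×λ_B; H₀) for a separable Hilbert space H₀ with orthonormal basis (ε_k), and a_k = ⟨a, ε_k⟩ ∈ L^∞(λ_A×λ_B), then for every X ∈ S²(H): Σ_k ‖Γ^{A,B}(a_k)(X)‖₂² ≤ ‖a‖_∞² ‖X‖₂². -/

import Mathlib

/-!
Since `Γ` is a `*`-homomorphism, `Σ_k ‖Γ(a_k) X‖² = ⟪X, Γ(Σ_k |a_k|²) X⟫`, and by Bessel's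
inequality `Σ_k |a_k|² ≤ ‖a‖² ≤ C²` almost everywhere, so contractivity of `Γ` bounds the
right-hand side by `C² ‖X‖²`. Finite partial sums suffice.
-/

open MeasureTheory ContinuousLinearMap ComplexConjugate

theorem Orthonormal.norm_sum_conj_inner_mul_inner_le {ι 𝕜 E : Type*} [RCLike 𝕜]
    [NormedAddCommGroup E] [InnerProductSpace 𝕜 E] {v : ι → E} (hv : Orthonormal 𝕜 v)
    (s : Finset ι) (x : E) :
    ‖∑ k ∈ s, conj (inner 𝕜 (v k) x) * inner 𝕜 (v k) x‖ ≤ ‖x‖ ^ 2 := by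
  simp_rw [RCLike.conj_mul]
  norm_cast
  rw [abs_of_nonneg (by positivity)]
  exact hv.sum_inner_products_le x

theorem ContinuousLinearMap.sum_norm_sq_apply_le {ι 𝕜 E : Type*} [RCLike 𝕜]
    [NormedAddCommGroup E] [InnerProductSpace 𝕜 E] [CompleteSpace E]
    (s : Finset ι) (T : ι → E →L[𝕜] E) (x : E) :
    ∑ k ∈ s, ‖T k x‖ ^ 2 ≤ ‖∑ k ∈ s, adjoint (T k) ∘L T k‖ * ‖x‖ ^ 2 := by
  set P := ∑ k ∈ s, adjoint (T k) ∘L T k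
  calc ∑ k ∈ s, ‖T k x‖ ^ 2 = RCLike.re (inner 𝕜 x (P x)) := by
        simp only [P, apply_norm_sq_eq_inner_adjoint_right, sum_apply, inner_sum, map_sum]
    _ ≤ ‖x‖ * ‖P x‖ := (RCLike.re_le_norm _).trans (norm_inner_le_norm _ _)
    _ ≤ ‖x‖ * (‖P‖ * ‖x‖) := by gcongr; exact P.le_opNorm x
    _ = ‖P‖ * ‖x‖ ^ 2 := by ring

theorem sum_adjoint_comp_eq_map_sum_conj_mul {ι Ω K : Type*}
    [NormedAddCommGroup K] [InnerProductSpace ℂ K] [CompleteSpace K]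
    (Γ : (Ω → ℂ) → (K →L[ℂ] K))
    (hadd : ∀ f g : Ω → ℂ, Γ (f + g) = Γ f + Γ g)
    (hmul : ∀ f g : Ω → ℂ, Γ (f * g) = Γ f ∘L Γ g)
    (hstar : ∀ f : Ω → ℂ, adjoint (Γ f) = Γ (fun t => conj (f t)))
    (s : Finset ι) (f : ι → Ω → ℂ) :
    ∑ k ∈ s, adjoint (Γ (f k)) ∘L Γ (f k) = Γ (∑ k ∈ s, fun t => conj (f k t) * f k t) := by
  rw [← AddMonoidHom.mk'_apply Γ hadd, map_sum]
  refine Finset.sum_congr rfl fun k _ => ?_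
  rw [AddMonoidHom.mk'_apply, hstar, ← hmul]
  rfl

theorem doi_coordinates_square_sum_general
    {ΩA ΩB : Type*} [MeasurableSpace ΩA] [MeasurableSpace ΩB]
    (μA : Measure ΩA) (μB : Measure ΩB)
    {K : Type*} [NormedAddCommGroup K] [InnerProductSpace ℂ K] [CompleteSpace K]
    (Γ : (ΩA × ΩB → ℂ) → (K →L[ℂ] K))
    (hadd : ∀ f g : ΩA × ΩB → ℂ, Γ (f + g) = Γ f + Γ g)
    (hmul : ∀ f g : ΩA × ΩB → ℂ, Γ (f * g) = Γ f ∘L Γ g)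
    (hstar : ∀ f : ΩA × ΩB → ℂ,
      ContinuousLinearMap.adjoint (Γ f) = Γ (fun t => (starRingEnd ℂ) (f t)))
    (hcontr : ∀ (f : ΩA × ΩB → ℂ) (c : ℝ),
      (∀ᵐ t ∂μA.prod μB, ‖f t‖ ≤ c) → ‖Γ f‖ ≤ c)
    {H₀ : Type*} [NormedAddCommGroup H₀] [InnerProductSpace ℂ H₀]
    (ε : HilbertBasis ℕ ℂ H₀)
    (a : ΩA × ΩB → H₀)
    (C : ℝ) (haC : ∀ᵐ t ∂μA.prod μB, ‖a t‖ ≤ C) :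
    ∀ X : K,
      ∑' k, ‖Γ (fun t => (inner ℂ (ε k) (a t) : ℂ)) X‖ ^ 2 ≤ C ^ 2 * ‖X‖ ^ 2 := by
  intro X
  refine tsum_le_of_sum_le' (by positivity) fun S => ?_
  set ak : ℕ → ΩA × ΩB → ℂ := fun k t => inner ℂ (ε k) (a t)
  have hbound : ‖Γ (∑ k ∈ S, fun t => conj (ak k t) * ak k t)‖ ≤ C ^ 2 := by
    refine hcontr _ _ ?_
    filter_upwards [haC] with t ht
    rw [Finset.sum_apply]
    exact (ε.orthonormal.norm_sum_conj_inner_mul_inner_le S (a t)).trans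
      (pow_le_pow_left₀ (norm_nonneg _) ht 2)
  calc ∑ k ∈ S, ‖Γ (ak k) X‖ ^ 2 ≤ ‖∑ k ∈ S, adjoint (Γ (ak k)) ∘L Γ (ak k)‖ * ‖X‖ ^ 2 :=
        sum_norm_sq_apply_le S (fun k => Γ (ak k)) X
    _ ≤ C ^ 2 * ‖X‖ ^ 2 := by
        rw [sum_adjoint_comp_eq_map_sum_conj_mul Γ hadd hmul hstar]
        gcongr

/-- let `Γ = Γ^{A,B}` be the double operator integral `w*`-continuous unital
`*`-representation of `L^∞(λ_A × λ_B)` on the Hilbert space `K = S²(H)` (formalized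
abstractly, on representatives, with `w*`-continuity expressed by `L¹`-representability of
the coefficient functionals). If `a ∈ L^∞(λ_A×λ_B; H₀)` for a separable Hilbert space `H₀`
with orthonormal basis `(ε_k)`, and `a_k = ⟨a, ε_k⟩`, then for every `X ∈ S²(H)`:
`Σ_k ‖Γ(a_k)(X)‖₂² ≤ ‖a‖_∞² ‖X‖₂²`. -/
theorem doi_coordinates_square_sum
    {ΩA ΩB : Type*} [MeasurableSpace ΩA] [MeasurableSpace ΩB]
    (μA : Measure ΩA) (μB : Measure ΩB) [SigmaFinite μA] [SigmaFinite μB]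
    {K : Type*} [NormedAddCommGroup K] [InnerProductSpace ℂ K] [CompleteSpace K]
    (Γ : (ΩA × ΩB → ℂ) → (K →L[ℂ] K))
    (hae : ∀ f g : ΩA × ΩB → ℂ, f =ᵐ[μA.prod μB] g → Γ f = Γ g)
    (hadd : ∀ f g : ΩA × ΩB → ℂ, Γ (f + g) = Γ f + Γ g)
    (hsmul : ∀ (c : ℂ) (f : ΩA × ΩB → ℂ), Γ (c • f) = c • Γ f)
    (hmul : ∀ f g : ΩA × ΩB → ℂ, Γ (f * g) = Γ f ∘L Γ g)
    (hone : Γ 1 = 1)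
    (hstar : ∀ f : ΩA × ΩB → ℂ,
      ContinuousLinearMap.adjoint (Γ f) = Γ (fun t => (starRingEnd ℂ) (f t)))
    (hcontr : ∀ (f : ΩA × ΩB → ℂ) (c : ℝ),
      (∀ᵐ t ∂μA.prod μB, ‖f t‖ ≤ c) → ‖Γ f‖ ≤ c)
    (hwstar : ∀ x y : K, ∃ h : ΩA × ΩB → ℂ, Integrable h (μA.prod μB) ∧
      ∀ f : ΩA × ΩB → ℂ, MemLp f ⊤ (μA.prod μB) →
        (inner ℂ y (Γ f x) : ℂ) = ∫ t, f t * h t ∂μA.prod μB)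
    {H₀ : Type*} [NormedAddCommGroup H₀] [InnerProductSpace ℂ H₀] [CompleteSpace H₀]
    [TopologicalSpace.SeparableSpace H₀]
    (ε : HilbertBasis ℕ ℂ H₀)
    (a : ΩA × ΩB → H₀) (ha : AEStronglyMeasurable a (μA.prod μB))
    (C : ℝ) (hC : 0 ≤ C) (haC : ∀ᵐ t ∂μA.prod μB, ‖a t‖ ≤ C) :
    ∀ X : K,
      ∑' k, ‖Γ (fun t => (inner ℂ (ε k) (a t) : ℂ)) X‖ ^ 2 ≤ C ^ 2 * ‖X‖ ^ 2 :=
  doi_coordinates_square_sum_general μA μB Γ hadd hmul hstar hcontr ε a C haC
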